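/- arXiv:1405.4435 — 7 statements merged into one kernel-verified Lean document; each statement's English description precedes it below -/
import Mathlib

section
/- For fixed γ > 0 and y > 0, the function F_y(x) = exp(γ·arctan(x/(y − γx)))·sqrt(y² + 2γyx + (1+γ²)x²) − exp(−γ·arctan(x/(y + γx)))·sqrt(y² − 2γyx + (1+γ²)x²) is strictly increasing on the interval (0, y/γ), satisfies F_y(0) = 0, and hence F_y(x) > 0 for all 0 < x < y/γ. -/
/-!
Write `G_c(x) = exp (c · arctan (x / (y - c x))) · √((y + c x)² + x²)`, so that
`F_y = G_γ - G_{-γ}`. The derivative of `G_c` is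
`exp (c · arctan (x / (y - c x))) · N_c(x) / (((y - c x)² + x²) · √((y + c x)² + x²))`
for a polynomial `N_c` with `N_c - N_{-c} = 4 c y³`. For `0 ≤ x < y / γ` the exponential factor
of `G_γ'` is at least `1`, that of `G_{-γ}'` is at most `1`, `N_γ > 0`, and the denominator of
`G_γ'` is the smaller of the two, since `(y - γ x)² + x² ≤ (y + γ x)² + x²`. Hence
`G_{-γ}' < G_γ'`, so `F_y` is strictly increasing on `[0, y / γ)`, and `F_y(0) = 0`.
-/

open Real Set

noncomputable def expArctanSqrt (c y x : ℝ) : ℝ :=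
  exp (c * arctan (x / (y - c * x))) * √((y + c * x) ^ 2 + x ^ 2)

def expArctanSqrtNum (c y x : ℝ) : ℝ :=
  c * y * ((y + c * x) ^ 2 + x ^ 2) + (c * (y + c * x) + x) * ((y - c * x) ^ 2 + x ^ 2)

noncomputable def expArctanSqrtDeriv (c y x : ℝ) : ℝ :=
  exp (c * arctan (x / (y - c * x))) * expArctanSqrtNum c y x /
    (((y - c * x) ^ 2 + x ^ 2) * √((y + c * x) ^ 2 + x ^ 2))

theorem expArctanSqrtNum_sub_neg (c y x : ℝ) :
    expArctanSqrtNum c y x - expArctanSqrtNum (-c) y x = 4 * c * y ^ 3 := by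
  unfold expArctanSqrtNum
  ring

theorem hasDerivAt_arctan_div_sub {c y x : ℝ} (h : y - c * x ≠ 0) :
    HasDerivAt (fun x => arctan (x / (y - c * x))) (y / ((y - c * x) ^ 2 + x ^ 2)) x := by
  have hden : HasDerivAt (fun x => y - c * x) (-c) x := by
    simpa using ((hasDerivAt_id' x).const_mul c).const_sub y
  refine ((hasDerivAt_id' x).fun_div hden h).arctan.congr_deriv ?_
  have : (y - c * x) ^ 2 + x ^ 2 ≠ 0 := by positivity
  rw [div_pow, one_add_div (pow_ne_zero 2 h)]
  field_simp
  ring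

theorem hasDerivAt_sqrt_add_sq {c y x : ℝ} (h : (y + c * x) ^ 2 + x ^ 2 ≠ 0) :
    HasDerivAt (fun x => √((y + c * x) ^ 2 + x ^ 2))
      ((c * (y + c * x) + x) / √((y + c * x) ^ 2 + x ^ 2)) x := by
  have hsq : HasDerivAt (fun x => (y + c * x) ^ 2 + x ^ 2) (2 * (c * (y + c * x) + x)) x := by
    refine ((((hasDerivAt_id' x).const_mul c).const_add y).fun_pow 2).fun_add
      ((hasDerivAt_id' x).fun_pow 2) |>.congr_deriv ?_
    norm_num
    ring
  refine (hsq.sqrt h).congr_deriv ?_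
  field_simp

theorem hasDerivAt_expArctanSqrt {c y x : ℝ} (h : y - c * x ≠ 0) :
    HasDerivAt (expArctanSqrt c y) (expArctanSqrtDeriv c y x) x := by
  have hQ : (y - c * x) ^ 2 + x ^ 2 ≠ 0 := by positivity
  have hP : 0 < (y + c * x) ^ 2 + x ^ 2 := by
    rcases eq_or_ne x 0 with rfl | hx
    · rw [mul_zero, add_zero]
      simp only [mul_zero, sub_zero] at h
      positivity
    · positivity
  refine (((hasDerivAt_arctan_div_sub h).const_mul c).exp.mul
    (hasDerivAt_sqrt_add_sq hP.ne')).congr_deriv ?_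
  unfold expArctanSqrtDeriv expArctanSqrtNum
  field_simp
  rw [sq_sqrt hP.le]

theorem mul_lt_mul_of_le_one_of_one_le {a b e₁ e₂ : ℝ} (he₁ : 0 < e₁) (he₁' : e₁ ≤ 1)
    (he₂ : 1 ≤ e₂) (ha : 0 < a) (hba : b < a) : e₁ * b < e₂ * a := by
  nlinarith

theorem expArctanSqrtDeriv_neg_lt {γ y x : ℝ} (hγ : 0 < γ) (hy : 0 < y) (hx : 0 ≤ x)
    (hxy : γ * x < y) : expArctanSqrtDeriv (-γ) y x < expArctanSqrtDeriv γ y x := by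
  have hp : 0 < y + γ * x := by positivity
  simp only [expArctanSqrtDeriv, neg_mul, sub_neg_eq_add, ← sub_eq_add_neg, mul_div_assoc]
  have hQP : (y - γ * x) ^ 2 + x ^ 2 ≤ (y + γ * x) ^ 2 + x ^ 2 := by
    nlinarith [mul_nonneg (mul_pos hγ hy).le hx]
  set P := (y + γ * x) ^ 2 + x ^ 2
  set Q := (y - γ * x) ^ 2 + x ^ 2
  have hQ : 0 < Q := by positivity
  have hP : 0 < P := hQ.trans_le hQP
  have hsQP : √Q ≤ √P := sqrt_le_sqrt hQP
  have hden : Q * √P ≤ P * √Q :=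
    calc Q * √P = (√Q * √Q) * √P := by rw [mul_self_sqrt hQ.le]
      _ = √Q * (√Q * √P) := by ring
      _ ≤ √P * (√Q * √P) := by gcongr
      _ = (√P * √P) * √Q := by ring
      _ = P * √Q := by rw [mul_self_sqrt hP.le]
  have hnum : 0 < expArctanSqrtNum γ y x := by unfold expArctanSqrtNum; positivity
  have hnum_lt : expArctanSqrtNum (-γ) y x < expArctanSqrtNum γ y x := by
    have := expArctanSqrtNum_sub_neg γ y x
    have : 0 < 4 * γ * y ^ 3 := by positivity
    linarith
  have hfrac : expArctanSqrtNum (-γ) y x / (P * √Q) < expArctanSqrtNum γ y x / (Q * √P) :=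
    div_lt_div₀ hnum_lt hden hnum.le (by positivity)
  refine mul_lt_mul_of_le_one_of_one_le (exp_pos _) ?_ ?_ (by positivity) hfrac
  · rw [exp_le_one_iff, neg_nonpos]
    exact mul_nonneg hγ.le (arctan_nonneg.mpr (by positivity))
  · exact one_le_exp (mul_nonneg hγ.le (arctan_nonneg.mpr (by positivity)))

theorem strictMonoOn_expArctanSqrt_sub_neg {γ y : ℝ} (hγ : 0 < γ) (hy : 0 < y) :
    StrictMonoOn (fun x => expArctanSqrt γ y x - expArctanSqrt (-γ) y x) (Ico 0 (y / γ)) := by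
  have hderiv : ∀ x ∈ Ico 0 (y / γ),
      HasDerivAt (fun x => expArctanSqrt γ y x - expArctanSqrt (-γ) y x)
        (expArctanSqrtDeriv γ y x - expArctanSqrtDeriv (-γ) y x) x := by
    rintro x ⟨hx, hxy⟩
    have : γ * x < y := (lt_div_iff₀' hγ).mp hxy
    exact (hasDerivAt_expArctanSqrt (by linarith)).sub
      (hasDerivAt_expArctanSqrt (by nlinarith))
  refine strictMonoOn_of_deriv_pos (convex_Ico 0 (y / γ))
    (fun x hx => (hderiv x hx).continuousAt.continuousWithinAt) fun x hx => ?_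
  rw [interior_Ico] at hx
  rw [(hderiv x (Ioo_subset_Ico_self hx)).deriv, sub_pos]
  exact expArctanSqrtDeriv_neg_lt hγ hy hx.1.le ((lt_div_iff₀' hγ).mp hx.2)

theorem stmt_1 (γ y : ℝ) (hγ : 0 < γ) (hy : 0 < y)
    (F : ℝ → ℝ)
    (hF : ∀ x : ℝ, F x =
      Real.exp (γ * Real.arctan (x / (y - γ * x))) *
        Real.sqrt (y ^ 2 + 2 * γ * y * x + (1 + γ ^ 2) * x ^ 2) -
      Real.exp (-(γ * Real.arctan (x / (y + γ * x)))) *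
        Real.sqrt (y ^ 2 - 2 * γ * y * x + (1 + γ ^ 2) * x ^ 2)) :
    StrictMonoOn F (Set.Ioo 0 (y / γ)) ∧ F 0 = 0 ∧
      ∀ x : ℝ, 0 < x → x < y / γ → 0 < F x := by
  have hF' : F = fun x => expArctanSqrt γ y x - expArctanSqrt (-γ) y x := by
    funext x
    simp only [hF, expArctanSqrt, neg_mul, sub_neg_eq_add, ← sub_eq_add_neg]
    ring_nf
  have hF0 : F 0 = 0 := by simp [hF]
  have hmono : StrictMonoOn F (Ico 0 (y / γ)) := hF' ▸ strictMonoOn_expArctanSqrt_sub_neg hγ hy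
  refine ⟨hmono.mono Ioo_subset_Ico_self, hF0, fun x hx hxy => ?_⟩
  simpa [hF0] using hmono ⟨le_rfl, div_pos hy hγ⟩ ⟨hx.le, hxy⟩ hx
end

section
/- Let γ > 0 and let h : ℝ → ℝ be C¹ with |h(y)| < y/γ for y > 0. Define the displacement function f(y) = exp(−γπ + γ·arctan(h(y)/(y − γh(y))))·sqrt(y² − 2γy·h(y) + (1+γ²)h(y)²) − exp(−γπ − γ·arctan(h(y)/(y + γh(y))))·sqrt(y² + 2γy·h(y) + (1+γ²)h(y)²). Then for y > 0: if h(y) > 0 then f(y) > 0; if h(y) < 0 then f(y) < 0; and if h(y) = 0 then f(y) = 0. -/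
/-!
Write `u = y - γH`, `v = y + γH`, `α = arctan (H/u)`, `β = arctan (H/v)`. Then
`f = e^{-γπ} (e^{γα} |u + iH| - e^{-γβ} |v + iH|)`, and replacing `H` by `-H` negates `f`,
so it suffices to show `log |v + iH| - log |u + iH| < γ (α + β)` for `H > 0`, where `v - u = 2γH`.
Along `t ∈ [u, v]` the derivative of `(t - u)(α + arctan (H/t)) - H log (t² + H²)` is positive:
convexity of `t ↦ arctan (H/t)` bounds `α` from below by its tangent line at `t`, and what remains
is `arctan x > x / (1 + x²)` for `x = H/t > 0`.
-/

open Real Set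

theorem div_one_add_sq_lt_arctan {x : ℝ} (hx : 0 < x) : x / (1 + x ^ 2) < arctan x := by
  calc x / (1 + x ^ 2) = sin (arctan x) * cos (arctan x) := by
        rw [sin_arctan, cos_arctan, div_mul_div_comm, mul_one, ← sqrt_mul (by positivity),
          sqrt_mul_self (by positivity)]
    _ ≤ sin (arctan x) := mul_le_of_le_one_right (sin_arctan_pos.2 hx).le (cos_le_one _)
    _ < arctan x := sin_lt (arctan_pos.2 hx)

theorem hasDerivAt_arctan_div (H : ℝ) {t : ℝ} (ht : t ≠ 0) :
    HasDerivAt (fun t ↦ arctan (H / t)) (-(H / (t ^ 2 + H ^ 2))) t := by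
  refine ((hasDerivAt_arctan (H / t)).comp t
    ((hasDerivAt_const t H).div (hasDerivAt_id t) ht)).congr_deriv ?_
  field_simp
  ring

theorem convexOn_arctan_div {H : ℝ} (hH : 0 ≤ H) : ConvexOn ℝ (Ioi 0) (fun t ↦ arctan (H / t)) := by
  have hderiv : EqOn (deriv fun t ↦ arctan (H / t)) (fun t ↦ -(H / (t ^ 2 + H ^ 2))) (Ioi 0) :=
    fun t ht ↦ (hasDerivAt_arctan_div H (ne_of_gt ht)).deriv
  refine MonotoneOn.convexOn_of_deriv (convex_Ioi 0) ?_ ?_ ?_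
  · exact fun t ht ↦ (hasDerivAt_arctan_div H (ne_of_gt ht)).continuousAt.continuousWithinAt
  · rw [interior_Ioi]
    exact fun t ht ↦ (hasDerivAt_arctan_div H (ne_of_gt ht)).differentiableAt.differentiableWithinAt
  · rw [interior_Ioi]
    intro s hs t ht hst
    rw [hderiv hs, hderiv ht, neg_le_neg_iff]
    have hs' : (0 : ℝ) < s := hs
    gcongr

theorem arctan_div_add_le_arctan_div {H u t : ℝ} (hH : 0 ≤ H) (hu : 0 < u) (hut : u < t) :
    arctan (H / t) + H * (t - u) / (t ^ 2 + H ^ 2) ≤ arctan (H / u) := by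
  have hslope := (convexOn_arctan_div hH).slope_le_of_hasDerivAt hu (hu.trans hut) hut
    (hasDerivAt_arctan_div H (hu.trans hut).ne')
  rw [slope_def_field, div_le_iff₀ (sub_pos.2 hut)] at hslope
  have : H * (t - u) / (t ^ 2 + H ^ 2) = H / (t ^ 2 + H ^ 2) * (t - u) := by ring
  linarith

theorem mul_log_sq_add_sq_sub_lt {u v H : ℝ} (hu : 0 < u) (hH : 0 < H) (huv : u < v) :
    H * (log (v ^ 2 + H ^ 2) - log (u ^ 2 + H ^ 2)) <
      (v - u) * (arctan (H / u) + arctan (H / v)) := by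
  set G : ℝ → ℝ := fun t ↦ (t - u) * (arctan (H / u) + arctan (H / t)) - H * log (t ^ 2 + H ^ 2)
  have hG : ∀ t, 0 < t → HasDerivAt G (arctan (H / u) + arctan (H / t)
      - (t - u) * (H / (t ^ 2 + H ^ 2)) - H * (2 * t / (t ^ 2 + H ^ 2))) t := by
    intro t ht
    have hlog : HasDerivAt (fun t ↦ log (t ^ 2 + H ^ 2)) (2 * t / (t ^ 2 + H ^ 2)) t := by
      simpa using ((hasDerivAt_pow 2 t).add_const (H ^ 2)).log (by positivity)
    refine ((((hasDerivAt_id t).sub_const u).mul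
      ((hasDerivAt_arctan_div H ht.ne').const_add (arctan (H / u)))).sub
        (hlog.const_mul H)).congr_deriv ?_
    simp only [id]
    ring
  have hmono : StrictMonoOn G (Ici u) := by
    refine strictMonoOn_of_deriv_pos (convex_Ici u)
      (fun t ht ↦ (hG t (hu.trans_le ht)).continuousAt.continuousWithinAt) ?_
    rw [interior_Ici]
    intro t (hut : u < t)
    have ht : 0 < t := hu.trans hut
    rw [(hG t ht).deriv]
    have htangent := arctan_div_add_le_arctan_div hH.le hu hut
    have hbound := div_one_add_sq_lt_arctan (div_pos hH ht)
    rw [show H / t / (1 + (H / t) ^ 2) = H * t / (t ^ 2 + H ^ 2) by field_simp] at hbound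
    have : (t - u) * (H / (t ^ 2 + H ^ 2)) = H * (t - u) / (t ^ 2 + H ^ 2) := by ring
    have : H * (2 * t / (t ^ 2 + H ^ 2)) = 2 * (H * t / (t ^ 2 + H ^ 2)) := by ring
    linarith
  have := hmono self_mem_Ici huv.le huv
  simp only [G, sub_self, zero_mul, zero_sub] at this
  linarith

noncomputable def displacement (γ y H : ℝ) : ℝ :=
  exp (-(γ * π) + γ * arctan (H / (y - γ * H))) * √(y ^ 2 - 2 * γ * y * H + (1 + γ ^ 2) * H ^ 2) -
    exp (-(γ * π) - γ * arctan (H / (y + γ * H))) * √(y ^ 2 + 2 * γ * y * H + (1 + γ ^ 2) * H ^ 2)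

theorem displacement_zero (γ y : ℝ) : displacement γ y 0 = 0 := by
  simp [displacement]

theorem displacement_neg (γ y H : ℝ) : displacement γ y (-H) = -displacement γ y H := by
  have e₁ : -H / (y - γ * -H) = -(H / (y + γ * H)) := by ring
  have e₂ : -H / (y + γ * -H) = -(H / (y - γ * H)) := by ring
  simp only [displacement, e₁, e₂, arctan_neg]
  ring_nf

theorem sqrt_eq_exp_log_div_two {x : ℝ} (hx : 0 < x) : √x = exp (log x / 2) := by
  rw [← log_sqrt hx.le, exp_log (sqrt_pos.2 hx)]

theorem displacement_pos {γ y H : ℝ} (hγ : 0 < γ) (hH : 0 < H) (hyH : γ * H < y) :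
    0 < displacement γ y H := by
  set u := y - γ * H
  set v := y + γ * H
  have hu : 0 < u := sub_pos.2 hyH
  have huv : u < v := by linarith [mul_pos hγ hH]
  have hlog := mul_log_sq_add_sq_sub_lt hu hH huv
  rw [show v - u = 2 * γ * H by ring] at hlog
  have hlog' : log (v ^ 2 + H ^ 2) / 2 - γ * arctan (H / v) <
      γ * arctan (H / u) + log (u ^ 2 + H ^ 2) / 2 := by
    nlinarith
  rw [displacement, sub_pos,
    show y ^ 2 - 2 * γ * y * H + (1 + γ ^ 2) * H ^ 2 = u ^ 2 + H ^ 2 by ring,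
    show y ^ 2 + 2 * γ * y * H + (1 + γ ^ 2) * H ^ 2 = v ^ 2 + H ^ 2 by ring,
    sqrt_eq_exp_log_div_two (by positivity), sqrt_eq_exp_log_div_two (by positivity),
    ← exp_add, ← exp_add, exp_lt_exp]
  linarith

theorem stmt_3_general (γ : ℝ) (hγ : 0 < γ) (h : ℝ → ℝ)
    (hbound : ∀ y : ℝ, 0 < y → |h y| < y / γ)
    (f : ℝ → ℝ)
    (hf : ∀ y : ℝ, f y =
      Real.exp (-(γ * Real.pi) + γ * Real.arctan (h y / (y - γ * h y))) *
        Real.sqrt (y ^ 2 - 2 * γ * y * h y + (1 + γ ^ 2) * h y ^ 2) -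
      Real.exp (-(γ * Real.pi) - γ * Real.arctan (h y / (y + γ * h y))) *
        Real.sqrt (y ^ 2 + 2 * γ * y * h y + (1 + γ ^ 2) * h y ^ 2)) :
    ∀ y : ℝ, 0 < y →
      (0 < h y → 0 < f y) ∧ (h y < 0 → f y < 0) ∧ (h y = 0 → f y = 0) := by
  intro y hy
  have hf' : f y = displacement γ y (h y) := hf y
  have hγh : γ * |h y| < y := by
    have := hbound y hy
    rwa [lt_div_iff₀ hγ, mul_comm] at this
  refine ⟨fun hpos ↦ ?_, fun hneg ↦ ?_, fun hzero ↦ ?_⟩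
  · rw [abs_of_pos hpos] at hγh
    exact hf' ▸ displacement_pos hγ hpos hγh
  · rw [abs_of_neg hneg] at hγh
    have := displacement_pos hγ (neg_pos.2 hneg) hγh
    rw [displacement_neg] at this
    linarith
  · rw [hf', hzero, displacement_zero]

theorem stmt_3 (γ : ℝ) (hγ : 0 < γ) (h : ℝ → ℝ)
    (hC1 : ContDiff ℝ 1 h) (h0 : h 0 = 0)
    (hbound : ∀ y : ℝ, 0 < y → |h y| < y / γ)
    (f : ℝ → ℝ)
    (hf : ∀ y : ℝ, f y =
      Real.exp (-(γ * Real.pi) + γ * Real.arctan (h y / (y - γ * h y))) *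
        Real.sqrt (y ^ 2 - 2 * γ * y * h y + (1 + γ ^ 2) * h y ^ 2) -
      Real.exp (-(γ * Real.pi) - γ * Real.arctan (h y / (y + γ * h y))) *
        Real.sqrt (y ^ 2 + 2 * γ * y * h y + (1 + γ ^ 2) * h y ^ 2)) :
    ∀ y : ℝ, 0 < y →
      (0 < h y → 0 < f y) ∧ (h y < 0 → f y < 0) ∧ (h y = 0 → f y = 0) :=
  stmt_3_general γ hγ h hbound f hf
end

section
/- Let γ > 0, y > 0, and h(y) real with |h(y)| < y/γ. Setting t_L = π + arctan(h(y)/(y + γh(y))) and φ₂⁻(t,x,y) = e^{−γt}[((γ²+1)x + γy)sin t + y cos t], one has φ₂⁻(t_L, h(y), y) = −exp(−γπ − γ·arctan(h(y)/(y + γh(y))))·sqrt((y + γh(y))² + h(y)²). -/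
/-! With `a = y + γ h > 0` and `θ = arctan (h / a)`, the point `(a, h)` has polar angle `θ` and
radius `r = √(a² + h²)`. Since `sin (π + θ) = -sin θ` and `cos (π + θ) = -cos θ`, the bracket of
`φ₂⁻` at `t = π + θ` is `-((γ a + h) sin θ + y cos θ) = -(a² + h²) / r = -r`. -/

open Real

namespace Real

theorem sqrt_one_add_div_sq {a : ℝ} (ha : 0 < a) (b : ℝ) :
    √(1 + (b / a) ^ 2) = √(a ^ 2 + b ^ 2) / a := by
  rw [show 1 + (b / a) ^ 2 = (a ^ 2 + b ^ 2) / a ^ 2 by field_simp, sqrt_div' _ (sq_nonneg a),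
    sqrt_sq ha.le]

theorem cos_arctan_div {a : ℝ} (ha : 0 < a) (b : ℝ) :
    cos (arctan (b / a)) = a / √(a ^ 2 + b ^ 2) := by
  rw [cos_arctan, sqrt_one_add_div_sq ha, one_div_div]

theorem sin_arctan_div {a : ℝ} (ha : 0 < a) (b : ℝ) :
    sin (arctan (b / a)) = b / √(a ^ 2 + b ^ 2) := by
  rw [sin_arctan, sqrt_one_add_div_sq ha, div_div_eq_mul_div, div_mul_cancel₀ _ ha.ne']

end Real

theorem stmt_9_general (γ y hy' : ℝ) (hγ : 0 < γ) (hb : |hy'| < y / γ)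
    (tL : ℝ) (htL : tL = Real.pi + Real.arctan (hy' / (y + γ * hy')))
    (φ₂ : ℝ → ℝ → ℝ → ℝ)
    (hφ₂ : ∀ t x y, φ₂ t x y =
      Real.exp (-(γ * t)) * (((γ ^ 2 + 1) * x + γ * y) * Real.sin t + y * Real.cos t)) :
    φ₂ tL hy' y =
      -(Real.exp (-(γ * Real.pi) - γ * Real.arctan (hy' / (y + γ * hy'))) *
        Real.sqrt ((y + γ * hy') ^ 2 + hy' ^ 2)) := by
  have ha : 0 < y + γ * hy' := by
    have := (lt_div_iff₀' hγ).mp (neg_lt.mp (abs_lt.mp hb).1)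
    linarith
  set a := y + γ * hy'
  set r := √(a ^ 2 + hy' ^ 2)
  have hr : 0 < r := sqrt_pos.mpr (by positivity)
  have hr2 : r ^ 2 = a ^ 2 + hy' ^ 2 := sq_sqrt (by positivity)
  rw [hφ₂, htL, sin_add, cos_add, sin_pi, cos_pi, sin_arctan_div ha, cos_arctan_div ha,
    show -(γ * π) - γ * arctan (hy' / a) = -(γ * (π + arctan (hy' / a))) by ring]
  field_simp
  linear_combination hr2

theorem stmt_9 (γ y hy' : ℝ) (hγ : 0 < γ) (hy : 0 < y) (hb : |hy'| < y / γ)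
    (tL : ℝ) (htL : tL = Real.pi + Real.arctan (hy' / (y + γ * hy')))
    (φ₂ : ℝ → ℝ → ℝ → ℝ)
    (hφ₂ : ∀ t x y, φ₂ t x y =
      Real.exp (-(γ * t)) * (((γ ^ 2 + 1) * x + γ * y) * Real.sin t + y * Real.cos t)) :
    φ₂ tL hy' y =
      -(Real.exp (-(γ * Real.pi) - γ * Real.arctan (hy' / (y + γ * hy'))) *
        Real.sqrt ((y + γ * hy') ^ 2 + hy' ^ 2)) :=
  stmt_9_general γ y hy' hγ hb tL htL φ₂ hφ₂
end

section
/- Let 0 < γ < sqrt(3/5), n ∈ ℕ, and h(y) = (2γ/((γ²+1)π))·sin(πy) for 0 ≤ y ≤ (2n+1)/2, h(y) = (2γ/((γ²+1)π))·(−1)ⁿ for y > (2n+1)/2. Then for all y > 0: h(y)(2γ − (1+γ²)h'(y)) < y and h(y)(2γ + (1+γ²)h'(y)) > −y. -/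
/-!
Write `x = π y`. Where `h` is the sine, `h (2γ ∓ (1 + γ²) h') = K / π · sin x (1 ∓ cos x)` with
`K = 4γ² / (1 + γ²) < 3/2`, so both bounds follow from `sin x (1 - cos x) ≤ 2x/3` for `x ≥ 0`
(the `+` case is the `-` case at `x - π`). With `t = x/2` this reads `3 sin³t cos t ≤ t`: for
`t ≥ 1` it holds because `sin³t cos t ≤ 3√3/16 < 1/3`, and for `t ≤ 1` by the Taylor bounds
`sin t ≤ t - t³/6 + t⁵/120`, `cos t ≤ 1 - t²/2 + t⁴/24`, which reduce it to a one-variable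
polynomial inequality (tight to within 0.3% near `t = 0.9`). Where `h` is constant,
`|h| · 2γ = K / π < 1/2 < y`.
-/

open Real Set

lemma le_of_hasDerivAt_le_of_le {f g f' g' : ℝ → ℝ} {a x : ℝ}
    (hf : ∀ y, HasDerivAt f (f' y) y) (hg : ∀ y, HasDerivAt g (g' y) y)
    (ha : f a ≤ g a) (hderiv : ∀ y, a < y → f' y ≤ g' y) (hax : a ≤ x) : f x ≤ g x := by
  have hmono : MonotoneOn (g - f) (Ici a) :=
    monotoneOn_of_hasDerivWithinAt_nonneg (convex_Ici a)
      (fun y _ ↦ ((hg y).sub (hf y)).continuousAt.continuousWithinAt)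
      (fun y _ ↦ ((hg y).sub (hf y)).hasDerivWithinAt)
      (fun y hy ↦ sub_nonneg.2 (hderiv y (by simpa using hy)))
  have := hmono self_mem_Ici hax hax
  simp only [Pi.sub_apply] at this
  linarith

lemma Real.cos_le_one_sub_sq_div_two_add (t : ℝ) : cos t ≤ 1 - t ^ 2 / 2 + t ^ 4 / 24 := by
  suffices h : ∀ t : ℝ, 0 ≤ t → cos t ≤ 1 - t ^ 2 / 2 + t ^ 4 / 24 by
    simpa only [cos_abs, sq_abs, Even.pow_abs ⟨2, rfl⟩] using h |t| (abs_nonneg t)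
  intro t ht
  refine le_of_hasDerivAt_le_of_le (f' := fun y ↦ -sin y)
    (g := fun y ↦ 1 - y ^ 2 / 2 + y ^ 4 / 24) (g' := fun y ↦ -y + y ^ 3 / 6)
    hasDerivAt_cos (fun y ↦ ?_) (by simp) (fun y hy ↦ ?_) ht
  · exact ((((hasDerivAt_pow 2 y).div_const 2).const_sub 1).add
      ((hasDerivAt_pow 4 y).div_const 24)).congr_deriv (by push_cast; ring)
  · linarith [sin_ge_sub_cube hy.le]

lemma Real.sin_le_sub_cube_add {t : ℝ} (ht : 0 ≤ t) :
    sin t ≤ t - t ^ 3 / 6 + t ^ 5 / 120 := by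
  refine le_of_hasDerivAt_le_of_le (g := fun y ↦ y - y ^ 3 / 6 + y ^ 5 / 120)
    (g' := fun y ↦ 1 - y ^ 2 / 2 + y ^ 4 / 24)
    hasDerivAt_sin (fun y ↦ ?_) (by simp) (fun y _ ↦ cos_le_one_sub_sq_div_two_add y) ht
  exact (((hasDerivAt_id y).sub ((hasDerivAt_pow 3 y).div_const 6)).add
    ((hasDerivAt_pow 5 y).div_const 120)).congr_deriv (by push_cast; ring)

lemma taylor_poly_le_one {u : ℝ} (h0 : 0 ≤ u) (h1 : u ≤ 1) :
    3 * u * (1 - u / 6 + u ^ 2 / 120) ^ 3 * (1 - u / 2 + u ^ 2 / 24) ≤ 1 := by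
  -- Bernstein-type certificates on `[0, 7/10]` and `[7/10, 1]`.
  rcases le_total u (7 / 10) with hc | hc
  · have hB (i : ℕ) : 0 ≤ u ^ i * (7 / 10 - u) ^ (9 - i) :=
      mul_nonneg (pow_nonneg h0 i) (pow_nonneg (by linarith) _)
    nlinarith [hB 0, hB 1, hB 2, hB 3, hB 4, hB 5, hB 6, hB 7, hB 8, hB 9]
  · have hB (i : ℕ) : 0 ≤ (u - 7 / 10) ^ i * (1 - u) ^ (9 - i) :=
      mul_nonneg (pow_nonneg (by linarith) i) (pow_nonneg (by linarith) _)
    nlinarith [hB 0, hB 1, hB 2, hB 3, hB 4, hB 5, hB 6, hB 7, hB 8, hB 9]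

lemma Real.sin_pow_three_mul_cos_le (t : ℝ) : sin t ^ 3 * cos t ≤ 1 / 3 := by
  have hsc := sin_sq_add_cos_sq t
  -- `u³(1 - u) ≤ 27/256` for `u = sin² t`, with equality at `u = 3/4`
  have hsq : (sin t ^ 3 * cos t) ^ 2 ≤ 27 / 256 := by
    nlinarith [sq_nonneg ((sin t ^ 2 - 3 / 4) * sin t ^ 2),
      mul_nonneg (sq_nonneg (sin t ^ 2 - 3 / 4)) (sq_nonneg (sin t)), sq_nonneg (sin t ^ 2 - 3 / 4)]
  nlinarith

lemma Real.three_mul_sin_pow_three_mul_cos_le_of_le_one {t : ℝ} (h0 : 0 ≤ t) (h1 : t ≤ 1) :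
    3 * sin t ^ 3 * cos t ≤ t := by
  have hC0 : 0 ≤ 1 - t ^ 2 / 2 + t ^ 4 / 24 := by
    nlinarith [pow_le_one₀ h0 h1 (n := 2), pow_nonneg h0 4]
  set P := t - t ^ 3 / 6 + t ^ 5 / 120
  set C := 1 - t ^ 2 / 2 + t ^ 4 / 24
  have hs0 : 0 ≤ sin t := sin_nonneg_of_nonneg_of_le_pi h0 (by linarith [pi_gt_three])
  have hsP : sin t ≤ P := sin_le_sub_cube_add h0
  have hPC : 3 * P ^ 3 * C ≤ t := by
    have hpoly := taylor_poly_le_one (sq_nonneg t) (by nlinarith)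
    have hfactor : 3 * P ^ 3 * C = t * (3 * t ^ 2 * (1 - t ^ 2 / 6 + (t ^ 2) ^ 2 / 120) ^ 3 *
        (1 - t ^ 2 / 2 + (t ^ 2) ^ 2 / 24)) := by ring
    rw [hfactor]
    exact mul_le_of_le_one_right h0 hpoly
  calc 3 * sin t ^ 3 * cos t ≤ 3 * sin t ^ 3 * C := by
        gcongr
        exact cos_le_one_sub_sq_div_two_add t
    _ ≤ 3 * P ^ 3 * C := by gcongr
    _ ≤ t := hPC

lemma Real.three_mul_sin_pow_three_mul_cos_le {t : ℝ} (ht : 0 ≤ t) :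
    3 * sin t ^ 3 * cos t ≤ t := by
  rcases le_total t 1 with h1 | h1
  · exact three_mul_sin_pow_three_mul_cos_le_of_le_one ht h1
  · linarith [sin_pow_three_mul_cos_le t]

lemma Real.sin_mul_one_sub_cos_le {x : ℝ} (hx : 0 ≤ x) : sin x * (1 - cos x) ≤ 2 / 3 * x := by
  have hhalf : sin x * (1 - cos x) = 4 * (sin (x / 2) ^ 3 * cos (x / 2)) := by
    conv_lhs => rw [← add_halves x, sin_add, cos_add]
    linear_combination (-2 * sin (x / 2) * cos (x / 2)) * sin_sq_add_cos_sq (x / 2)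
  linarith [three_mul_sin_pow_three_mul_cos_le (by positivity : 0 ≤ x / 2)]

lemma Real.neg_sin_mul_one_add_cos_le {x : ℝ} (hx : 0 ≤ x) :
    -(sin x * (1 + cos x)) ≤ 2 / 3 * x := by
  rcases le_total x π with hπ | hπ
  · have hcos : 0 ≤ 1 + cos x := by linarith [neg_one_le_cos x]
    linarith [mul_nonneg (sin_nonneg_of_nonneg_of_le_pi hx hπ) hcos]
  · have := sin_mul_one_sub_cos_le (sub_nonneg.2 hπ)
    rw [sin_sub_pi, cos_sub_pi] at this
    linarith [pi_pos]

theorem stmt_12 (n : ℕ) (γ : ℝ) (hγ : 0 < γ) (hγ' : γ < Real.sqrt (3 / 5))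
    (h h' : ℝ → ℝ)
    (hh : ∀ y : ℝ, 0 ≤ y → h y =
      (2 * γ / ((γ ^ 2 + 1) * Real.pi)) *
        (if y ≤ (2 * n + 1) / 2 then Real.sin (Real.pi * y) else (-1) ^ n))
    (hh' : ∀ y : ℝ, 0 < y → h' y =
      if y ≤ (2 * n + 1) / 2 then (2 * γ / (γ ^ 2 + 1)) * Real.cos (Real.pi * y) else 0) :
    ∀ y : ℝ, 0 < y →
      h y * (2 * γ - (1 + γ ^ 2) * h' y) < y ∧
      -y < h y * (2 * γ + (1 + γ ^ 2) * h' y) := by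
  intro y hy
  have hγ2 : γ ^ 2 < 3 / 5 := (lt_sqrt hγ.le).1 hγ'
  set K := 4 * γ ^ 2 / ((γ ^ 2 + 1) * π) with hK
  have hK0 : 0 ≤ K := by positivity
  have hKπ : K * π < 3 / 2 := by
    rw [hK, div_mul_eq_mul_div, div_lt_iff₀ (by positivity)]
    nlinarith [pi_pos]
  rw [hh y hy.le, hh' y hy]
  split_ifs with hyn
  · have hx : 0 ≤ π * y := by positivity
    have hKy : K * (2 / 3 * (π * y)) < y := by nlinarith
    have e_sub : 2 * γ / ((γ ^ 2 + 1) * π) * sin (π * y) *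
        (2 * γ - (1 + γ ^ 2) * (2 * γ / (γ ^ 2 + 1) * cos (π * y))) =
          K * (sin (π * y) * (1 - cos (π * y))) := by rw [hK]; field_simp; ring
    have e_add : 2 * γ / ((γ ^ 2 + 1) * π) * sin (π * y) *
        (2 * γ + (1 + γ ^ 2) * (2 * γ / (γ ^ 2 + 1) * cos (π * y))) =
          K * (sin (π * y) * (1 + cos (π * y))) := by rw [hK]; field_simp; ring
    rw [e_sub, e_add]
    constructor
    · calc K * (sin (π * y) * (1 - cos (π * y))) ≤ K * (2 / 3 * (π * y)) :=
            mul_le_mul_of_nonneg_left (sin_mul_one_sub_cos_le hx) hK0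
        _ < y := hKy
    · nlinarith [mul_le_mul_of_nonneg_left (neg_sin_mul_one_add_cos_le hx) hK0]
  · have hKy : K < y := by
      have : (1 : ℝ) / 2 ≤ (2 * n + 1) / 2 := by linarith [n.cast_nonneg (α := ℝ)]
      nlinarith [pi_gt_three]
    have e : 2 * γ / ((γ ^ 2 + 1) * π) * (-1) ^ n * (2 * γ) = K * (-1) ^ n := by
      rw [hK]; field_simp; ring
    have habs : |K * (-1) ^ n| < y := by
      rwa [abs_mul, abs_neg_one_pow, mul_one, abs_of_nonneg hK0]
    simp only [mul_zero, sub_zero, add_zero, e]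
    exact (abs_lt.1 habs).symm
end

section
/- Let 0 < α < (−1+√3)/2 and h(y) = α·y²·sin(1/y) for y > 0. Then for all y > 0: 2h(y)(1 − h'(y)) < y and 2h(y)(1 + h'(y)) > −y, where h'(y) = 2αy·sin(1/y) − α·cos(1/y). -/
/-!
With `u = y sin (1/y) ∈ [-1, 1]` and `c = cos (1/y) ∈ [-1, 1]`, the two quantities are
`y · 2αu(1 - 2αu + αc)` and `-y · 2α(-u)(1 - 2α(-u) + α(-c))`, so both inequalities reduce to
`2αu(1 - 2αu + αc) < 1` on the square `|u|, |c| ≤ 1`. Dropping `-4α²u² ≤ 0`, this is at most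
`2α(1 + α)`, which is `< 1` exactly when `α < (-1 + √3)/2`.
-/

open Real

lemma abs_mul_sin_one_div_le_one (y : ℝ) : |y * sin (1 / y)| ≤ 1 :=
  calc |y * sin (1 / y)| = |y| * |sin (1 / y)| := abs_mul _ _
    _ ≤ |y| * |1 / y| := mul_le_mul_of_nonneg_left abs_sin_le_abs (abs_nonneg y)
    _ = |y * (1 / y)| := (abs_mul _ _).symm
    _ ≤ 1 := by
      rcases eq_or_ne y 0 with rfl | hy
      · simp
      · rw [mul_one_div_cancel hy, abs_one]

lemma two_mul_mul_one_add_lt_one {α : ℝ} (hα : 0 < α) (hα' : α < (-1 + √3) / 2) :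
    2 * α * (1 + α) < 1 := by
  nlinarith [sq_sqrt (show (0 : ℝ) ≤ 3 by norm_num), sqrt_nonneg 3]

lemma two_mul_mul_one_sub_add_lt_one {a u c : ℝ} (ha : 0 < a) (hkey : 2 * a * (1 + a) < 1)
    (hu : |u| ≤ 1) (hc : |c| ≤ 1) : 2 * a * u * (1 - 2 * a * u + a * c) < 1 := by
  have hac : 0 ≤ 1 + a * c := by
    nlinarith [neg_le_of_abs_le hc, mul_le_mul_of_nonneg_left (neg_le_of_abs_le hc) ha.le]
  calc 2 * a * u * (1 - 2 * a * u + a * c) = 2 * a * u * (1 + a * c) - 4 * a ^ 2 * u ^ 2 := by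
        ring
    _ ≤ 2 * a * |u| * (1 + a * c) := by
        nlinarith [le_abs_self u, sq_nonneg (a * u), mul_le_mul_of_nonneg_right (le_abs_self u)
          (mul_nonneg (mul_nonneg zero_le_two ha.le) hac)]
    _ ≤ 2 * a * 1 * (1 + a * 1) := by
        gcongr
        exact le_of_abs_le hc
    _ < 1 := by linarith

theorem stmt_15 (α : ℝ) (hα : 0 < α) (hα' : α < (-1 + Real.sqrt 3) / 2) :
    ∀ y : ℝ, 0 < y →
      2 * (α * y ^ 2 * Real.sin (1 / y)) *
          (1 - (2 * α * y * Real.sin (1 / y) - α * Real.cos (1 / y))) < y ∧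
      -y < 2 * (α * y ^ 2 * Real.sin (1 / y)) *
          (1 + (2 * α * y * Real.sin (1 / y) - α * Real.cos (1 / y))) := by
  intro y hy
  have hkey := two_mul_mul_one_add_lt_one hα hα'
  have hu := abs_mul_sin_one_div_le_one y
  have hc := abs_cos_le_one (1 / y)
  set u := y * sin (1 / y)
  set c := cos (1 / y)
  constructor
  · calc 2 * (α * y ^ 2 * sin (1 / y)) * (1 - (2 * α * y * sin (1 / y) - α * c))
          = y * (2 * α * u * (1 - 2 * α * u + α * c)) := by ring
      _ < y * 1 := mul_lt_mul_of_pos_left (two_mul_mul_one_sub_add_lt_one hα hkey hu hc) hy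
      _ = y := mul_one y
  · have h := two_mul_mul_one_sub_add_lt_one hα hkey (u := -u) (c := -c)
      (by rwa [abs_neg]) (by rwa [abs_neg])
    calc -y = y * (-1) := by ring
      _ < y * -(2 * α * -u * (1 - 2 * α * -u + α * -c)) :=
          mul_lt_mul_of_pos_left (neg_lt_neg h) hy
      _ = 2 * (α * y ^ 2 * sin (1 / y)) * (1 + (2 * α * y * sin (1 / y) - α * c)) := by ring
end

section
/- Let γ > 0 and let h be C¹ with h(y*) = 0 for some y* > 0. Then the displacement function f(y) = exp(−γπ + γ·arctan(h(y)/(y − γh(y))))·sqrt(y² − 2γy·h(y) + (1+γ²)h(y)²) − exp(−γπ − γ·arctan(h(y)/(y + γh(y))))·sqrt(y² + 2γy·h(y) + (1+γ²)h(y)²) satisfies f(y*) = 0 and f'(y*) = 0. -/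
/-!
Writing `B_c y = exp (c · arctan (h y / (y - c h y))) · √((y - c h y)² + h y²)`, the displacement
function is `f = e^{-γπ} (B_γ - B_{-γ})`. When `h y* = 0`, every branch `B_c` takes the value `y*`
at `y*` with derivative `c h'(y*) + (1 - c h'(y*)) = 1`, independently of `c`; so both `f` and `f'`
vanish at `y*`.
-/

open Real

noncomputable def displacementBranch (c : ℝ) (h : ℝ → ℝ) (y : ℝ) : ℝ :=
  exp (c * arctan (h y / (y - c * h y))) * √(y ^ 2 - 2 * c * y * h y + (1 + c ^ 2) * h y ^ 2)

section displacementBranch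

variable {h : ℝ → ℝ} {a y₀ : ℝ} (c : ℝ)

theorem hasDerivAt_exp_mul_arctan_div (hh : HasDerivAt h a y₀) (hy₀ : y₀ ≠ 0) (hz : h y₀ = 0) :
    HasDerivAt (fun y => exp (c * arctan (h y / (y - c * h y)))) (c * a / y₀) y₀ := by
  have hden : HasDerivAt (fun y => y - c * h y) (1 - c * a) y₀ :=
    (hasDerivAt_id y₀).sub (hh.const_mul c)
  refine ((((hh.div hden (by simpa [hz] using hy₀)).arctan).const_mul c).exp).congr_deriv ?_
  simp only [Pi.div_apply, hz, mul_zero, zero_mul, sub_zero, zero_div, arctan_zero, exp_zero,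
    zero_pow two_ne_zero, add_zero]
  field_simp

theorem hasDerivAt_sqrt_sq_sub_mul_add (hh : HasDerivAt h a y₀) (hy₀ : 0 < y₀)
    (hz : h y₀ = 0) :
    HasDerivAt (fun y => √(y ^ 2 - 2 * c * y * h y + (1 + c ^ 2) * h y ^ 2)) (1 - c * a) y₀ := by
  have hq : HasDerivAt (fun y => y ^ 2 - 2 * c * y * h y + (1 + c ^ 2) * h y ^ 2)
      (2 * y₀ - 2 * c * (y₀ * a + h y₀) + (1 + c ^ 2) * (2 * h y₀ * a)) y₀ := by
    refine (((hasDerivAt_pow 2 y₀).sub (((hasDerivAt_id' y₀).const_mul (2 * c)).mul hh)).add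
      ((hh.pow 2).const_mul (1 + c ^ 2))).congr_deriv ?_
    ring
  refine (hq.sqrt (by simp [hz, hy₀.ne'])).congr_deriv ?_
  simp only [hz, mul_zero, zero_mul, sub_zero, add_zero, zero_pow two_ne_zero, sqrt_sq hy₀.le]
  field_simp

theorem displacementBranch_self (hy₀ : 0 ≤ y₀) (hz : h y₀ = 0) :
    displacementBranch c h y₀ = y₀ := by
  simp [displacementBranch, hz, sqrt_sq hy₀]

theorem hasDerivAt_displacementBranch (hh : HasDerivAt h a y₀) (hy₀ : 0 < y₀)
    (hz : h y₀ = 0) :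
    HasDerivAt (displacementBranch c h) 1 y₀ := by
  refine ((hasDerivAt_exp_mul_arctan_div c hh hy₀.ne' hz).mul
    (hasDerivAt_sqrt_sq_sub_mul_add c hh hy₀ hz)).congr_deriv ?_
  simp only [hz, mul_zero, sub_zero, zero_div, arctan_zero, exp_zero, add_zero,
    zero_pow two_ne_zero, sqrt_sq hy₀.le]
  field_simp
  ring

end displacementBranch

theorem stmt_18_general (γ : ℝ) (h : ℝ → ℝ) (hC1 : ContDiff ℝ 1 h)
    (ystar : ℝ) (hystar : 0 < ystar) (hz : h ystar = 0)
    (f : ℝ → ℝ)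
    (hf : ∀ y : ℝ, f y =
      Real.exp (-(γ * Real.pi) + γ * Real.arctan (h y / (y - γ * h y))) *
        Real.sqrt (y ^ 2 - 2 * γ * y * h y + (1 + γ ^ 2) * h y ^ 2) -
      Real.exp (-(γ * Real.pi) - γ * Real.arctan (h y / (y + γ * h y))) *
        Real.sqrt (y ^ 2 + 2 * γ * y * h y + (1 + γ ^ 2) * h y ^ 2)) :
    f ystar = 0 ∧ HasDerivAt f 0 ystar := by
  have hf_eq : f = fun y =>
      exp (-(γ * π)) * (displacementBranch γ h y - displacementBranch (-γ) h y) := by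
    ext y
    rw [hf, sub_eq_add_neg (-(γ * π)), exp_add, exp_add]
    simp only [displacementBranch, mul_neg, neg_mul, sub_neg_eq_add, neg_sq]
    ring
  have hh : HasDerivAt h (deriv h ystar) ystar :=
    (hC1.differentiable one_ne_zero ystar).hasDerivAt
  subst hf_eq
  refine ⟨by simp [displacementBranch_self _ hystar.le hz], ?_⟩
  simpa using ((hasDerivAt_displacementBranch γ hh hystar hz).sub
    (hasDerivAt_displacementBranch (-γ) hh hystar hz)).const_mul (exp (-(γ * π)))

theorem stmt_18 (γ : ℝ) (hγ : 0 < γ) (h : ℝ → ℝ) (hC1 : ContDiff ℝ 1 h)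
    (ystar : ℝ) (hystar : 0 < ystar) (hz : h ystar = 0)
    (hbound : ∀ᶠ y in nhds ystar, |h y| < y / γ)
    (f : ℝ → ℝ)
    (hf : ∀ y : ℝ, f y =
      Real.exp (-(γ * Real.pi) + γ * Real.arctan (h y / (y - γ * h y))) *
        Real.sqrt (y ^ 2 - 2 * γ * y * h y + (1 + γ ^ 2) * h y ^ 2) -
      Real.exp (-(γ * Real.pi) - γ * Real.arctan (h y / (y + γ * h y))) *
        Real.sqrt (y ^ 2 + 2 * γ * y * h y + (1 + γ ^ 2) * h y ^ 2)) :
    f ystar = 0 ∧ HasDerivAt f 0 ystar :=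
  stmt_18_general γ h hC1 ystar hystar hz f hf
end

section
/- Let 0 < γ < sqrt(3/13), n ∈ ℕ, and h(y) = (2γ/((γ²+1)π))·(1 − cos(πy)) for 0 ≤ y ≤ 2n+1, h(y) = 4γ/((γ²+1)π) for y > 2n+1. Then h(y) ≥ 0 for all y ≥ 0, |h(y)| < y/γ for y > 0, and h(y)(2γ − (1+γ²)h'(y)) < y and h(y)(2γ + (1+γ²)h'(y)) > −y for all y > 0. -/
/-!
With `t = πy`, on the oscillating part `(1 + γ²) h' = 2γ sin t`, so
`h (2γ ∓ (1 + γ²) h') = 4γ² / ((γ² + 1) π) · (1 - cos t) (1 ∓ sin t)`.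
The `+` product is nonnegative. For the `-` product, `(1 - cos t)(1 - sin t) ≤ 4t/3` bounds it by
`16 γ² y / (3 (γ² + 1))`, which is below `y` exactly when `γ² < 3/13`. The bound `|h| < y/γ` only
needs `1 - cos t ≤ t` and `γ² < 1`, and on the plateau `y ≥ 1` every bound reduces to `π > 3`.
-/

open Real

lemma Real.one_sub_cos_le_abs (t : ℝ) : 1 - cos t ≤ |t| := by
  have h := abs_cos_sub_cos_le t 0
  rw [cos_zero, sub_zero, abs_sub_comm] at h
  exact (le_abs_self _).trans h

/-- On `[0, π]` the factor `1 - sin t` is at most `1`; beyond `π` the product is at most `4 < 4π/3`. -/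
lemma Real.one_sub_cos_mul_one_sub_sin_le {t : ℝ} (ht : 0 ≤ t) :
    (1 - cos t) * (1 - sin t) ≤ 4 / 3 * t := by
  have hcos : 0 ≤ 1 - cos t := sub_nonneg.2 (cos_le_one t)
  rcases le_or_gt t π with htπ | htπ
  · have hsin : 0 ≤ sin t := sin_nonneg_of_nonneg_of_le_pi ht htπ
    have hcos_le : 1 - cos t ≤ t := by simpa [abs_of_nonneg ht] using one_sub_cos_le_abs t
    nlinarith [sin_le_one t]
  · nlinarith [neg_one_le_cos t, neg_one_le_sin t, cos_le_one t, sin_le_one t, pi_gt_three]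

section Bump

variable {γ y : ℝ}

lemma bump_lt_div (hγ : 0 < γ) (hγ1 : γ ^ 2 < 1) (hy : 0 < y) :
    2 * γ / ((γ ^ 2 + 1) * π) * (1 - cos (π * y)) < y / γ := by
  have hcos : 1 - cos (π * y) ≤ π * y := by
    simpa [abs_of_pos (mul_pos pi_pos hy)] using one_sub_cos_le_abs (π * y)
  calc 2 * γ / ((γ ^ 2 + 1) * π) * (1 - cos (π * y))
      ≤ 2 * γ / ((γ ^ 2 + 1) * π) * (π * y) := by gcongr
    _ = 2 * γ * y / (γ ^ 2 + 1) := by field_simp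
    _ < y / γ := by
      rw [div_lt_div_iff₀ (by positivity) hγ]
      nlinarith

lemma bump_plateau_lt_div (hγ : 0 < γ) (hγ1 : γ ^ 2 < 1) (hy : 1 ≤ y) :
    2 * γ / ((γ ^ 2 + 1) * π) * 2 < y / γ := by
  rw [div_mul_eq_mul_div, div_lt_div_iff₀ (by positivity) hγ]
  have : (γ ^ 2 + 1) * π ≤ y * ((γ ^ 2 + 1) * π) := le_mul_of_one_le_left (by positivity) hy
  nlinarith [pi_gt_three]

lemma bump_mul_sub_lt (hγ : 0 < γ) (hγ2 : γ ^ 2 < 3 / 13) (hy : 0 < y) :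
    2 * γ / ((γ ^ 2 + 1) * π) * (1 - cos (π * y)) *
      (2 * γ - (1 + γ ^ 2) * (2 * γ / (γ ^ 2 + 1) * sin (π * y))) < y := by
  have hprod := one_sub_cos_mul_one_sub_sin_le (mul_pos pi_pos hy).le
  calc 2 * γ / ((γ ^ 2 + 1) * π) * (1 - cos (π * y)) *
        (2 * γ - (1 + γ ^ 2) * (2 * γ / (γ ^ 2 + 1) * sin (π * y)))
      = 4 * γ ^ 2 / ((γ ^ 2 + 1) * π) * ((1 - cos (π * y)) * (1 - sin (π * y))) := by
        field_simp; ring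
    _ ≤ 4 * γ ^ 2 / ((γ ^ 2 + 1) * π) * (4 / 3 * (π * y)) := by gcongr
    _ = 16 * γ ^ 2 / (3 * (γ ^ 2 + 1)) * y := by field_simp; ring
    _ < 1 * y := by
      gcongr
      rw [div_lt_one (by positivity)]
      linarith
    _ = y := one_mul y

lemma bump_plateau_mul_lt (hγ2 : γ ^ 2 < 3 / 13) (hy : 1 ≤ y) :
    2 * γ / ((γ ^ 2 + 1) * π) * 2 * (2 * γ) < y := by
  have hlt : 2 * γ / ((γ ^ 2 + 1) * π) * 2 * (2 * γ) < 1 := by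
    rw [div_mul_eq_mul_div, div_mul_eq_mul_div, div_lt_one (by positivity)]
    nlinarith [pi_gt_three]
  linarith

end Bump

theorem stmt_19 (n : ℕ) (γ : ℝ) (hγ : 0 < γ) (hγ' : γ < Real.sqrt (3 / 13))
    (h h' : ℝ → ℝ)
    (hh : ∀ y : ℝ, 0 ≤ y → h y =
      (2 * γ / ((γ ^ 2 + 1) * Real.pi)) *
        (if y ≤ 2 * n + 1 then 1 - Real.cos (Real.pi * y) else 2))
    (hh' : ∀ y : ℝ, 0 < y → h' y =
      if y ≤ 2 * n + 1 then (2 * γ / (γ ^ 2 + 1)) * Real.sin (Real.pi * y) else 0) :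
    (∀ y : ℝ, 0 ≤ y → 0 ≤ h y) ∧
    (∀ y : ℝ, 0 < y → |h y| < y / γ) ∧
    (∀ y : ℝ, 0 < y →
      h y * (2 * γ - (1 + γ ^ 2) * h' y) < y ∧
      -y < h y * (2 * γ + (1 + γ ^ 2) * h' y)) := by
  have hγ2 : γ ^ 2 < 3 / 13 := (lt_sqrt hγ.le).1 hγ'
  have hγ1 : γ ^ 2 < 1 := by linarith
  have plateau : ∀ y : ℝ, ¬ y ≤ 2 * n + 1 → 1 ≤ y := fun y hy => by
    have : (0 : ℝ) ≤ n := n.cast_nonneg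
    linarith [not_le.1 hy]
  have h_nonneg : ∀ y : ℝ, 0 ≤ y → 0 ≤ h y := fun y hy => by
    rw [hh y hy]
    split_ifs
    · exact mul_nonneg (by positivity) (sub_nonneg.2 (cos_le_one _))
    · positivity
  have h'_bound : ∀ y : ℝ, 0 < y → 0 ≤ 2 * γ + (1 + γ ^ 2) * h' y := fun y hy => by
    rw [hh' y hy]
    split_ifs
    · rw [show 2 * γ + (1 + γ ^ 2) * (2 * γ / (γ ^ 2 + 1) * sin (π * y))
          = 2 * γ * (1 + sin (π * y)) by field_simp; ring]
      exact mul_nonneg (by positivity) (by linarith [neg_one_le_sin (π * y)])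
    · simp only [mul_zero, add_zero]; positivity
  refine ⟨h_nonneg, fun y hy => ?_, fun y hy => ⟨?_, ?_⟩⟩
  · rw [abs_of_nonneg (h_nonneg y hy.le), hh y hy.le]
    split_ifs with hle
    · exact bump_lt_div hγ hγ1 hy
    · exact bump_plateau_lt_div hγ hγ1 (plateau y hle)
  · rw [hh y hy.le, hh' y hy]
    split_ifs with hle
    · exact bump_mul_sub_lt hγ hγ2 hy
    · simpa only [mul_zero, sub_zero] using bump_plateau_mul_lt hγ2 (plateau y hle)
  · linarith [mul_nonneg (h_nonneg y hy.le) (h'_bound y hy)]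
end
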